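/- arXiv:math/0312050 — 5 statements merged into one kernel-verified Lean document; each statement's English description precedes it below -/
import Mathlib

section
/- For a d-simplex Δ in ℝᵈ with vertices x₀, ..., x_d and barycenter c = (x₀+...+x_d)/(d+1), one has (d+1)²·‖c‖²·vol(Δ) + (‖x₀‖² + ... + ‖x_d‖²)·vol(Δ) = (d+1)(d+2)·∫_Δ ‖x‖² dx. -/
/-!
Parametrize `Δ` by the corner simplex `S = {t ∈ ℝᵈ | t ≥ 0, ∑ tᵢ ≤ 1}` through the affine map
`t ↦ x₀ + ∑ tᵢ (xᵢ₊₁ - x₀)`. Both `vol Δ` and `∫_Δ ‖p‖²` pick up the same Jacobian factor, and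
expanding the square reduces `∫_S ‖x₀ + ∑ tᵢ (xᵢ₊₁ - x₀)‖²` to the moments `∫_S tᵢ` and
`∫_S tᵢ tⱼ`; these moments assemble into `(‖∑ xᵢ‖² + ∑ ‖xᵢ‖²) / (d+2)!`, while `vol S = 1/d!`.

The moments are Dirichlet integrals `∫_S ∏ tᵢ^kᵢ = ∏ kᵢ! / (n + ∑ kᵢ)!`, obtained by integrating
`∏ tᵢ^kᵢ e^{-u}` over `{(t, u) | t ≥ 0, ∑ tᵢ ≤ u}` in both orders: integrating out `u` first
leaves a product of Gamma integrals, integrating out `t` first leaves `u^(n + ∑ kᵢ)` times the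
integral over `S`.
-/

open MeasureTheory Set Real
open scoped Nat Pointwise RealInnerProductSpace

lemma integral_Ioi_pow_mul_exp_neg (m : ℕ) :
    ∫ s in Ioi (0 : ℝ), s ^ m * exp (-s) = m ! := by
  have h := Real.integral_rpow_mul_exp_neg_mul_Ioi (a := m + 1) (r := 1) (by positivity) one_pos
  simp only [add_sub_cancel_right, Real.rpow_natCast, one_mul, div_one, Real.one_rpow,
    Real.Gamma_nat_eq_factorial] at h
  exact h

lemma integrableOn_Ioi_pow_mul_exp_neg (m : ℕ) :
    IntegrableOn (fun s : ℝ => s ^ m * exp (-s)) (Ioi 0) := by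
  have h := Real.GammaIntegral_convergent (s := m + 1) (by positivity)
  simp only [add_sub_cancel_right, Real.rpow_natCast] at h
  exact h.congr_fun (fun s _ => mul_comm _ _) measurableSet_Ioi

def cornerSimplex (n : ℕ) (u : ℝ) : Set (Fin n → ℝ) := {t | 0 ≤ t ∧ ∑ i, t i ≤ u}

section Dirichlet

variable {n : ℕ}

lemma isClosed_cornerSimplex (u : ℝ) : IsClosed (cornerSimplex n u) :=
  (isClosed_le continuous_const continuous_id).inter
    (isClosed_le (continuous_finsetSum _ fun i _ => continuous_apply i) continuous_const)

lemma measurableSet_cornerSimplex (u : ℝ) : MeasurableSet (cornerSimplex n u) :=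
  (isClosed_cornerSimplex u).measurableSet

lemma measurableSet_setOf_mem_cornerSimplex :
    MeasurableSet {p : (Fin n → ℝ) × ℝ | p.1 ∈ cornerSimplex n p.2} :=
  (measurableSet_le measurable_const measurable_fst).inter
    (measurableSet_le (by fun_prop) measurable_snd)

lemma isCompact_cornerSimplex (u : ℝ) : IsCompact (cornerSimplex n u) := by
  refine (isCompact_univ_pi fun _ => isCompact_Icc (a := 0) (b := u)).of_isClosed_subset
    (isClosed_cornerSimplex u) fun t ht i _ => ⟨ht.1 i, ?_⟩
  exact (Finset.single_le_sum (fun j _ => ht.1 j) (Finset.mem_univ i)).trans ht.2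

lemma cornerSimplex_eq_empty {u : ℝ} (hu : u < 0) : cornerSimplex n u = ∅ :=
  eq_empty_of_forall_notMem fun _ ht =>
    (Finset.sum_nonneg fun i _ => ht.1 i).not_gt (ht.2.trans_lt hu)

lemma smul_cornerSimplex {u : ℝ} (hu : 0 < u) : u • cornerSimplex n 1 = cornerSimplex n u := by
  ext t
  simp only [mem_smul_set_iff_inv_smul_mem₀ hu.ne', cornerSimplex, mem_ofPred_eq, Pi.le_def,
    Pi.zero_apply, Pi.smul_apply, smul_eq_mul, ← Finset.mul_sum, inv_mul_le_one₀ hu, inv_pos, hu,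
    mul_nonneg_iff_of_pos_left]

lemma convex_cornerSimplex (u : ℝ) : Convex ℝ (cornerSimplex n u) :=
  (convex_Ici 0).inter (convex_halfSpace_le
    ⟨fun _ _ => Finset.sum_add_distrib, fun _ _ => (Finset.mul_sum _ _ _).symm⟩ u)

lemma cornerSimplex_one_eq_convexHull : cornerSimplex n 1 =
    convexHull ℝ (range (Fin.cons 0 fun i => Pi.single i 1 : Fin (n + 1) → Fin n → ℝ)) := by
  refine subset_antisymm (fun t ht => ?_) (convexHull_min ?_ (convex_cornerSimplex 1))
  · set w : Fin (n + 1) → ℝ := Fin.cons (1 - ∑ i, t i) t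
    have hw : ∑ j, w j • (Fin.cons 0 fun i => Pi.single i 1 : Fin (n + 1) → Fin n → ℝ) j = t := by
      simp [w, Fin.sum_univ_succ, ← pi_eq_sum_univ']
    rw [← hw]
    refine (convex_convexHull ℝ _).sum_mem (fun j _ => ?_) (by simp [w, Fin.sum_univ_succ])
      fun j _ => subset_convexHull ℝ _ (mem_range_self j)
    refine Fin.cases (by simpa [w] using ht.2) (fun i => by simpa [w] using ht.1 i) j
  · rintro _ ⟨j, rfl⟩
    refine Fin.cases ⟨le_rfl, by simp⟩ (fun i => ⟨?_, ?_⟩) j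
    · simp [Pi.single_nonneg]
    · simp

lemma setIntegral_cornerSimplex_prod_pow {u : ℝ} (hu : 0 < u) (k : Fin n → ℕ) :
    ∫ t in cornerSimplex n u, ∏ i, t i ^ k i =
      u ^ (n + ∑ i, k i) * ∫ t in cornerSimplex n 1, ∏ i, t i ^ k i := by
  have h := Measure.setIntegral_comp_smul_of_pos volume (fun t : Fin n → ℝ => ∏ i, t i ^ k i)
    (cornerSimplex n 1) hu
  simp only [Pi.smul_apply, smul_eq_mul, mul_pow, Finset.prod_mul_distrib,
    Finset.prod_pow_eq_pow_sum, integral_const_mul, smul_cornerSimplex hu,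
    Module.finrank_fin_fun] at h
  rw [pow_add, mul_assoc, h]
  field_simp

lemma prod_pow_mul_exp_neg_sum (k : Fin n → ℕ) (t : Fin n → ℝ) :
    (∏ i, t i ^ k i) * exp (-∑ i, t i) = ∏ i, t i ^ k i * exp (-t i) := by
  rw [Finset.prod_mul_distrib, ← Finset.sum_neg_distrib, Real.exp_sum]

lemma volume_restrict_Ici_zero : (volume : Measure (Fin n → ℝ)).restrict (Ici 0) =
    Measure.pi fun _ => volume.restrict (Ici 0) := by
  rw [← Measure.restrict_pi_pi, ← pi_univ_Ici, volume_pi]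
  rfl

lemma integrableOn_prod_pow_mul_exp_neg_sum (k : Fin n → ℕ) :
    IntegrableOn (fun t => (∏ i, t i ^ k i) * exp (-∑ i, t i)) (Ici (0 : Fin n → ℝ)) := by
  simp only [IntegrableOn, prod_pow_mul_exp_neg_sum, volume_restrict_Ici_zero]
  exact Integrable.fintype_prod fun i =>
    (integrableOn_Ici_iff_integrableOn_Ioi (by simp)).2 (integrableOn_Ioi_pow_mul_exp_neg (k i))

lemma setIntegral_prod_pow_mul_exp_neg_sum (k : Fin n → ℕ) :
    ∫ t in Ici (0 : Fin n → ℝ), (∏ i, t i ^ k i) * exp (-∑ i, t i) = ∏ i, ((k i) ! : ℝ) := by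
  simp only [prod_pow_mul_exp_neg_sum, volume_restrict_Ici_zero]
  rw [integral_fintype_prod_eq_prod (f := fun i s => s ^ k i * exp (-s))]
  simp only [integral_Ici_eq_integral_Ioi, integral_Ioi_pow_mul_exp_neg]

noncomputable def dirichletIntegrand (k : Fin n → ℕ) : (Fin n → ℝ) × ℝ → ℝ :=
  {p | p.1 ∈ cornerSimplex n p.2}.indicator fun p => (∏ i, p.1 i ^ k i) * exp (-p.2)

lemma dirichletIntegrand_nonneg (k : Fin n → ℕ) (p : (Fin n → ℝ) × ℝ) :
    0 ≤ dirichletIntegrand k p :=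
  indicator_nonneg (fun _ hp => mul_nonneg (Finset.prod_nonneg fun i _ => pow_nonneg (hp.1 i) _)
    (exp_pos _).le) p

lemma integral_dirichletIntegrand_left (k : Fin n → ℕ) (u : ℝ) :
    ∫ t, dirichletIntegrand k (t, u) = (∫ t in cornerSimplex n u, ∏ i, t i ^ k i) * exp (-u) := by
  rw [← integral_mul_const, ← integral_indicator (measurableSet_cornerSimplex u)]
  rfl

lemma dirichletIntegrand_slice (k : Fin n → ℕ) (t : Fin n → ℝ) :
    (fun u => dirichletIntegrand k (t, u)) = (Ici (∑ i, t i)).indicator fun u =>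
      (Ici (0 : Fin n → ℝ)).indicator (fun t => ∏ i, t i ^ k i) t * exp (-u) := by
  ext u
  by_cases ht : 0 ≤ t <;> simp [dirichletIntegrand, indicator, cornerSimplex, ht]

lemma integral_dirichletIntegrand_right (k : Fin n → ℕ) (t : Fin n → ℝ) :
    ∫ u, dirichletIntegrand k (t, u) =
      (Ici (0 : Fin n → ℝ)).indicator (fun t => (∏ i, t i ^ k i) * exp (-∑ i, t i)) t := by
  rw [dirichletIntegrand_slice, integral_indicator measurableSet_Ici, integral_Ici_eq_integral_Ioi,
    integral_const_mul, integral_exp_neg_Ioi, indicator_mul_left]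

lemma integrable_dirichletIntegrand (k : Fin n → ℕ) : Integrable (dirichletIntegrand k) := by
  have hmeas : Measurable (dirichletIntegrand k) :=
    Measurable.indicator (by fun_prop) measurableSet_setOf_mem_cornerSimplex
  rw [Measure.volume_eq_prod, integrable_prod_iff hmeas.aestronglyMeasurable]
  refine ⟨Filter.Eventually.of_forall fun t => ?_, ?_⟩
  · rw [dirichletIntegrand_slice, integrable_indicator_iff measurableSet_Ici]
    exact ((integrableOn_exp_neg_Ioi _).mono_set (Ici_subset_Ioi.2 (sub_one_lt _))).const_mul _
  · simp only [Real.norm_of_nonneg (dirichletIntegrand_nonneg k _),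
      integral_dirichletIntegrand_right]
    exact (integrable_indicator_iff measurableSet_Ici).2 (integrableOn_prod_pow_mul_exp_neg_sum k)

theorem setIntegral_cornerSimplex_one_prod_pow (k : Fin n → ℕ) :
    ∫ t in cornerSimplex n 1, ∏ i, t i ^ k i = (∏ i, ((k i) ! : ℝ)) / (n + ∑ i, k i) ! := by
  have hF := integrable_dirichletIntegrand k
  have h_right : ∫ p, dirichletIntegrand k p = ∏ i, ((k i) ! : ℝ) := by
    rw [Measure.volume_eq_prod, integral_prod _ hF]
    simp only [integral_dirichletIntegrand_right]
    rw [integral_indicator measurableSet_Ici, setIntegral_prod_pow_mul_exp_neg_sum]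
  have h_left : ∫ p, dirichletIntegrand k p =
      (∫ t in cornerSimplex n 1, ∏ i, t i ^ k i) * (n + ∑ i, k i) ! := by
    rw [Measure.volume_eq_prod, integral_prod_symm _ hF]
    simp only [integral_dirichletIntegrand_left]
    have h_neg : ∀ u ∉ Ici (0 : ℝ), (∫ t in cornerSimplex n u, ∏ i, t i ^ k i) * exp (-u) = 0 :=
      fun u hu => by rw [cornerSimplex_eq_empty (not_le.1 hu), Measure.restrict_empty,
        integral_zero_measure, zero_mul]
    rw [← setIntegral_eq_integral_of_forall_compl_eq_zero h_neg, integral_Ici_eq_integral_Ioi,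
      setIntegral_congr_fun measurableSet_Ioi fun u hu => by
        rw [setIntegral_cornerSimplex_prod_pow hu, mul_comm _ (∫ _ in _, _), mul_assoc]]
    rw [integral_const_mul, integral_Ioi_pow_mul_exp_neg]
  rw [eq_div_iff (by positivity), ← h_left, h_right]

lemma prod_pow_single {ι M : Type*} [Fintype ι] [DecidableEq ι] [CommMonoid M] (t : ι → M)
    (i : ι) (m : ℕ) : ∏ l, t l ^ (Pi.single i m : ι → ℕ) l = t i ^ m := by
  simp [Pi.single_apply]

lemma measureReal_cornerSimplex_one : volume.real (cornerSimplex n 1) = 1 / n ! := by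
  simpa using setIntegral_cornerSimplex_one_prod_pow (0 : Fin n → ℕ)

lemma setIntegral_cornerSimplex_one_apply (i : Fin n) :
    ∫ t in cornerSimplex n 1, t i = 1 / (n + 1) ! := by
  simpa [prod_pow_single, Pi.single_apply, apply_ite Nat.factorial] using
    setIntegral_cornerSimplex_one_prod_pow (Pi.single i 1)

lemma prod_factorial_single_add_single (i j : Fin n) :
    ∏ l, (((Pi.single i 1 + Pi.single j 1 : Fin n → ℕ) l) ! : ℝ) = if i = j then 2 else 1 := by
  rcases eq_or_ne i j with rfl | hij
  · rw [← Pi.single_add, if_pos rfl]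
    simp [Pi.single_apply, apply_ite Nat.factorial]
  · rw [if_neg hij]
    refine Finset.prod_eq_one fun l _ => ?_
    rw [Nat.cast_eq_one, Nat.factorial_eq_one]
    simp only [Pi.add_apply, Pi.single_apply]
    split_ifs <;> simp_all

lemma setIntegral_cornerSimplex_one_apply_mul_apply (i j : Fin n) :
    ∫ t in cornerSimplex n 1, t i * t j = (if i = j then 2 else 1) / (n + 2) ! := by
  have h := setIntegral_cornerSimplex_one_prod_pow (Pi.single i 1 + Pi.single j 1)
  have hsum : ∑ l, (Pi.single i 1 + Pi.single j 1 : Fin n → ℕ) l = 2 := by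
    simp [Finset.sum_add_distrib]
  rw [prod_factorial_single_add_single, hsum] at h
  simpa only [Pi.add_apply, pow_add, Finset.prod_mul_distrib, prod_pow_single, pow_one] using h

end Dirichlet

def simplexParam {n : ℕ} {V : Type*} [AddCommGroup V] [Module ℝ V] (x : Fin (n + 1) → V) :
    (Fin n → ℝ) →ᵃ[ℝ] V :=
  AffineMap.const ℝ _ (x 0) + (Fintype.linearCombination ℝ fun i => x i.succ - x 0).toAffineMap

section Parametrization

variable {n : ℕ} {V : Type*} [AddCommGroup V] [Module ℝ V]

lemma simplexParam_apply (x : Fin (n + 1) → V) (t : Fin n → ℝ) :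
    simplexParam x t = x 0 + ∑ i, t i • (x i.succ - x 0) := by
  simp [simplexParam, Fintype.linearCombination_apply]

lemma injective_simplexParam {x : Fin (n + 1) → V} (hx : AffineIndependent ℝ x) :
    Function.Injective (simplexParam x) := by
  have h := (affineIndependent_iff_linearIndependent_vsub ℝ x 0).1 hx
  have hli : LinearIndependent ℝ fun i : Fin n => x i.succ - x 0 :=
    h.comp (fun i => ⟨i.succ, i.succ_ne_zero⟩) fun _ _ hab =>
      Fin.succ_injective _ (congrArg Subtype.val hab)
  rw [← AffineMap.linear_injective_iff]
  simpa [simplexParam, linearIndependent_iff_injective_fintypeLinearCombination] using hli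

lemma image_simplexParam_cornerSimplex (x : Fin (n + 1) → V) :
    simplexParam x '' cornerSimplex n 1 = convexHull ℝ (range x) := by
  rw [cornerSimplex_one_eq_convexHull, AffineMap.image_convexHull, ← range_comp]
  congr 2
  ext j
  refine Fin.cases ?_ (fun i => ?_) j <;> simp [simplexParam_apply, Pi.single_apply]

end Parametrization

theorem setIntegral_image_affineMap {E F : Type*} [NormedAddCommGroup E] [NormedSpace ℝ E]
    [FiniteDimensional ℝ E] [MeasurableSpace E] [BorelSpace E] (μ : Measure E)
    [μ.IsAddHaarMeasure] [NormedAddCommGroup F] [NormedSpace ℝ F] {T : E →ᵃ[ℝ] E}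
    (hT : Function.Injective T) {s : Set E} (hs : MeasurableSet s) (f : E → F) :
    ∫ p in T '' s, f p ∂μ = |LinearMap.det T.linear| • ∫ t in s, f (T t) ∂μ := by
  have hderiv : ∀ t ∈ s, HasFDerivWithinAt T (LinearMap.toContinuousLinearMap T.linear) s t :=
    fun t _ => by
      rw [AffineMap.decomp T]
      exact ((LinearMap.toContinuousLinearMap T.linear).hasFDerivAt.add_const _).hasFDerivWithinAt
  rw [integral_image_eq_integral_abs_det_fderiv_smul μ hs hderiv hT.injOn, integral_smul]
  rfl

theorem exists_setIntegral_convexHull_eq {n : ℕ} {x : Fin (n + 1) → EuclideanSpace ℝ (Fin n)}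
    (hx : AffineIndependent ℝ x) : ∃ D : ℝ, ∀ f : EuclideanSpace ℝ (Fin n) → ℝ,
      ∫ p in convexHull ℝ (range x), f p = D * ∫ t in cornerSimplex n 1, f (simplexParam x t) := by
  let e : EuclideanSpace ℝ (Fin n) ≃ₗ[ℝ] (Fin n → ℝ) := WithLp.linearEquiv 2 ℝ (Fin n → ℝ)
  let T := (simplexParam x).comp e.toLinearMap.toAffineMap
  have hT : Function.Injective T := (injective_simplexParam hx).comp e.injective
  have himage : T '' (e ⁻¹' cornerSimplex n 1) = convexHull ℝ (range x) := by
    rw [AffineMap.coe_comp, image_comp, LinearMap.coe_toAffineMap, LinearEquiv.coe_coe,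
      image_preimage_eq _ e.surjective, image_simplexParam_cornerSimplex]
  refine ⟨|LinearMap.det T.linear|, fun f => ?_⟩
  have hs : MeasurableSet (e ⁻¹' cornerSimplex n 1) :=
    (measurableSet_cornerSimplex 1).preimage (PiLp.volume_preserving_ofLp _).measurable
  rw [← himage, setIntegral_image_affineMap volume hT hs, smul_eq_mul]
  congr 1
  exact (PiLp.volume_preserving_ofLp _).setIntegral_preimage_emb
    (MeasurableEquiv.toLp 2 _).symm.measurableEmbedding (fun t => f (simplexParam x t)) _

section InnerProductSpace

variable {n : ℕ} {E : Type*} [NormedAddCommGroup E] [InnerProductSpace ℝ E]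

lemma norm_add_sum_smul_sq (v : E) (y : Fin n → E) (t : Fin n → ℝ) :
    ‖v + ∑ i, t i • y i‖ ^ 2 =
      ‖v‖ ^ 2 + 2 * ∑ i, t i * ⟪v, y i⟫ + ∑ i, ∑ j, t i * t j * ⟪y i, y j⟫ := by
  simp only [norm_add_sq_real, ← real_inner_self_eq_norm_sq (∑ i, t i • y i), inner_sum, sum_inner,
    real_inner_smul_left, real_inner_smul_right, Finset.mul_sum]
  congr 1
  refine Finset.sum_congr rfl fun i _ => Finset.sum_congr rfl fun j _ => ?_
  rw [real_inner_comm]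
  ring

lemma norm_sum_sq_eq_sum_sum_inner (y : Fin n → E) : ‖∑ i, y i‖ ^ 2 = ∑ i, ∑ j, ⟪y i, y j⟫ := by
  rw [← real_inner_self_eq_norm_sq, sum_inner]
  simp only [inner_sum]

lemma setIntegral_cornerSimplex_one_norm_add_sum_smul_sq (v : E) (y : Fin n → E) :
    ∫ t in cornerSimplex n 1, ‖v + ∑ i, t i • y i‖ ^ 2 =
      ‖v‖ ^ 2 / n ! + 2 * ⟪v, ∑ i, y i⟫ / (n + 1) ! +
        (‖∑ i, y i‖ ^ 2 + ∑ i, ‖y i‖ ^ 2) / (n + 2) ! := by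
  have hintegrable : ∀ f : (Fin n → ℝ) → ℝ, Continuous f → IntegrableOn f (cornerSimplex n 1) :=
    fun f hf => hf.continuousOn.integrableOn_compact (isCompact_cornerSimplex 1)
  simp only [norm_add_sum_smul_sq]
  rw [integral_add (hintegrable _ (by fun_prop)) (hintegrable _ (by fun_prop)),
    integral_add (hintegrable _ (by fun_prop)) (hintegrable _ (by fun_prop)), setIntegral_const,
    measureReal_cornerSimplex_one, integral_const_mul,
    integral_finsetSum _ fun i _ => hintegrable _ (by fun_prop),
    integral_finsetSum _ fun i _ => hintegrable _ (by fun_prop)]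
  have hquad : ∀ i, ∫ t in cornerSimplex n 1, ∑ j, t i * t j * ⟪y i, y j⟫ =
      ∑ j, (if i = j then 2 else 1) / (n + 2) ! * ⟪y i, y j⟫ := fun i => by
    rw [integral_finsetSum _ fun j _ => hintegrable _ (by fun_prop)]
    simp only [integral_mul_const, setIntegral_cornerSimplex_one_apply_mul_apply]
  simp only [integral_mul_const, setIntegral_cornerSimplex_one_apply, hquad, inner_sum,
    norm_sum_sq_eq_sum_sum_inner]
  have hdiag : ∀ i j, (if i = j then 2 else 1) / ((n + 2) ! : ℝ) * ⟪y i, y j⟫ =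
      (⟪y i, y j⟫ + if i = j then ⟪y i, y j⟫ else 0) / (n + 2) ! := fun i j => by
    split_ifs <;> ring
  simp only [hdiag, ← Finset.sum_div, Finset.sum_add_distrib, Finset.sum_ite_eq, Finset.mem_univ,
    if_true, real_inner_self_eq_norm_sq, ← Finset.mul_sum, smul_eq_mul]
  ring

theorem setIntegral_cornerSimplex_one_norm_simplexParam_sq (x : Fin (n + 1) → E) :
    ∫ t in cornerSimplex n 1, ‖simplexParam x t‖ ^ 2 =
      (‖∑ i, x i‖ ^ 2 + ∑ i, ‖x i‖ ^ 2) / (n + 2) ! := by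
  set y : Fin n → E := fun i => x i.succ - x 0
  have hx : ∀ i, x i.succ = x 0 + y i := fun i => (add_sub_cancel _ _).symm
  have hnorm_sum : ‖∑ i, x i‖ ^ 2 =
      (n + 1) ^ 2 * ‖x 0‖ ^ 2 + 2 * (n + 1) * ⟪x 0, ∑ i, y i⟫ + ‖∑ i, y i‖ ^ 2 := by
    have hsum : ∑ i, x i = (n + 1 : ℝ) • x 0 + ∑ i, y i := by
      simp only [Fin.sum_univ_succ, hx, Finset.sum_add_distrib, Finset.sum_const,
        Finset.card_univ, Fintype.card_fin, ← Nat.cast_smul_eq_nsmul ℝ, add_smul, one_smul]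
      abel
    rw [hsum, norm_add_sq_real, norm_smul, real_inner_smul_left, Real.norm_eq_abs,
      abs_of_pos (by positivity)]
    ring
  have hsum_norm : ∑ i, ‖x i‖ ^ 2 =
      (n + 1) * ‖x 0‖ ^ 2 + 2 * ⟪x 0, ∑ i, y i⟫ + ∑ i, ‖y i‖ ^ 2 := by
    simp only [Fin.sum_univ_succ, hx, norm_add_sq_real, Finset.sum_add_distrib, Finset.sum_const,
      Finset.card_univ, Fintype.card_fin, nsmul_eq_mul, ← Finset.mul_sum, inner_sum]
    ring
  have hparam : ∀ t, simplexParam x t = x 0 + ∑ i, t i • y i := simplexParam_apply x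
  simp only [hparam]
  rw [setIntegral_cornerSimplex_one_norm_add_sum_smul_sq, hnorm_sum, hsum_norm,
    Nat.factorial_succ (n + 1), Nat.factorial_succ n]
  push_cast
  field_simp
  ring

end InnerProductSpace

/-- For a `d`-simplex Δ in ℝᵈ with vertices `x 0, …, x d` and barycenter
`c = (x₀ + ⋯ + x_d)/(d+1)`:
`(d+1)²·‖c‖²·vol(Δ) + (Σᵢ ‖xᵢ‖²)·vol(Δ) = (d+1)(d+2)·∫_Δ ‖p‖² dp`. -/
theorem parabolic_identity {d : ℕ} (x : Fin (d + 1) → EuclideanSpace ℝ (Fin d))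
    (hx : AffineIndependent ℝ x) :
    let Δ := convexHull ℝ (Set.range x)
    let vol := (volume Δ).toReal
    let c := ((d : ℝ) + 1)⁻¹ • ∑ i, x i
    ((d : ℝ) + 1) ^ 2 * ‖c‖ ^ 2 * vol + (∑ i, ‖x i‖ ^ 2) * vol =
      ((d : ℝ) + 1) * ((d : ℝ) + 2) * ∫ p in Δ, ‖p‖ ^ 2 := by
  intro Δ vol c
  obtain ⟨D, hD⟩ := exists_setIntegral_convexHull_eq hx
  have hvol : vol = D / d ! := by
    have h := hD fun _ => 1
    simp only [setIntegral_const, measureReal_cornerSimplex_one, smul_eq_mul, mul_one] at h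
    exact h.trans (div_eq_mul_one_div _ _).symm
  have hc : ((d : ℝ) + 1) ^ 2 * ‖c‖ ^ 2 = ‖∑ i, x i‖ ^ 2 := by
    rw [norm_smul, mul_pow, norm_inv, Real.norm_eq_abs,
      abs_of_pos (by positivity : (0 : ℝ) < d + 1)]
    field_simp
  rw [hc, hvol, hD, setIntegral_cornerSimplex_one_norm_simplexParam_sq, Nat.factorial_succ,
    Nat.factorial_succ]
  push_cast
  field_simp
  ring
end

section
/- Let ABCD be a convex quadrilateral in the plane in which no three vertices are collinear, and suppose D lies strictly outside the circumcircle of triangle ABC (so that diagonal AC gives the Delaunay triangulation of the quadrilateral, up to relabeling). Denote by R_{XYZ} the circumradius of triangle XYZ. Then max(R_{ABD}, R_{BCD}) may exceed some of R_{ABC}, R_{ACD}, but in all cases min over the Delaunay pair is smaller: specifically, min(R_{ABC}, R_{ACD}) ≤ min(R_{ABD}, R_{BCD}) and max(R_{ABC}, R_{ACD}) ≤ max(R_{ABD}, R_{BCD}). -/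
/-- Counterclockwise orientation predicate for three planar points. -/
def ccw (A B C : EuclideanSpace ℝ (Fin 2)) : Prop :=
  0 < (B 0 - A 0) * (C 1 - A 1) - (B 1 - A 1) * (C 0 - A 0)

/-- The circumradius of the triangle `XYZ`. -/
noncomputable def circumRad {A B C : EuclideanSpace ℝ (Fin 2)}
    (h : AffineIndependent ℝ ![A, B, C]) : ℝ :=
  (⟨![A, B, C], h⟩ : Affine.Simplex ℝ (EuclideanSpace ℝ (Fin 2)) 2).circumradius

/-- The circumcenter of the triangle `XYZ`. -/
noncomputable def circumCtr {A B C : EuclideanSpace ℝ (Fin 2)}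
    (h : AffineIndependent ℝ ![A, B, C]) : EuclideanSpace ℝ (Fin 2) :=
  (⟨![A, B, C], h⟩ : Affine.Simplex ℝ (EuclideanSpace ℝ (Fin 2)) 2).circumcenter

/-!
A side `PQ` shared by triangles `PQV` and `PQW`, with `V` and `W` on the same side of it, has
`|PQ| = 2 R_PQV sin ∠PVQ = 2 R_PQW sin ∠PWQ` (law of sines). If `W` is not inside the circle
`PQV`, the inscribed angle `∠PWQ` is at most `∠PVQ`, and then `R_PQW < R_PQV` forces
`∠PVQ + ∠PWQ > π`. Were `R_ABD` smaller than both `R_ABC` and `R_ACD`, this would happen across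
`AB` and across `AD`; the four angles involved are the angle of the quadrilateral at `C` and two
angles of the triangle `ABD`, so their sum is at most `2π`, a contradiction. The other three
inequalities are proved the same way. The Delaunay condition enters through the in-circle
determinant, whose invariance under even permutations of the four points makes `D` outside the
circle `ABC` equivalent to `B` outside the circle `ACD`.
-/
open EuclideanGeometry Real

namespace Orientation

variable {E : Type*} [NormedAddCommGroup E] [InnerProductSpace ℝ E] [Fact (Module.finrank ℝ E = 2)]
  (o : Orientation ℝ E (Fin 2))

theorem sin_oangle_mul_norm_mul_norm (x y : E) :
    (o.oangle x y).sin * (‖x‖ * ‖y‖) = o.areaForm x y := by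
  rcases eq_or_ne x 0 with rfl | hx
  · simp
  rcases eq_or_ne y 0 with rfl | hy
  · simp
  rw [oangle, Real.Angle.sin_coe, Complex.sin_arg, ← o.norm_kahler,
    div_mul_cancel₀ _ (norm_ne_zero_iff.2 (o.kahler_ne_zero hx hy))]
  simp [kahler_apply_apply]

end Orientation

theorem pi_lt_add_of_sin_lt_sin {α β : ℝ} (hβ : 0 < β) (hβα : β ≤ α) (hα : α < π)
    (h : sin α < sin β) : π < α + β := by
  by_contra! hle
  rcases le_total α (π / 2) with hα2 | hα2
  · exact h.not_ge (sin_le_sin_of_le_of_le_pi_div_two (by linarith) hα2 hβα)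
  · rw [← sin_pi_sub α] at h
    exact h.not_ge (sin_le_sin_of_le_of_le_pi_div_two (by linarith) (by linarith) (by linarith))

local notation "ℝ²" => EuclideanSpace ℝ (Fin 2)

instance : Fact (Module.finrank ℝ ℝ² = 2) := ⟨finrank_euclideanSpace_fin⟩

noncomputable instance : Module.Oriented ℝ ℝ² (Fin 2) :=
  ⟨(EuclideanSpace.basisFun (Fin 2) ℝ).toBasis.orientation⟩

def cross (P Q S : ℝ²) : ℝ := (Q 0 - P 0) * (S 1 - P 1) - (Q 1 - P 1) * (S 0 - P 0)

theorem dist_sq_eq_fin_two (x y : ℝ²) : dist x y ^ 2 = (x 0 - y 0) ^ 2 + (x 1 - y 1) ^ 2 := by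
  rw [EuclideanSpace.dist_eq, sq_sqrt (by positivity)]
  simp [Fin.sum_univ_two, Real.dist_eq, sq_abs]

theorem cos_angle_mul_dist_mul_dist (P Q S : ℝ²) :
    cos (∠ Q P S) * (dist P Q * dist P S) =
      (Q 0 - P 0) * (S 0 - P 0) + (Q 1 - P 1) * (S 1 - P 1) := by
  rw [dist_eq_norm_vsub', dist_eq_norm_vsub', EuclideanGeometry.angle,
    InnerProductGeometry.cos_angle_mul_norm_mul_norm]
  simp [PiLp.inner_apply, Fin.sum_univ_two]
  ring

theorem sin_oangle_mul_dist_mul_dist (P Q S : ℝ²) :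
    (∡ Q P S).sin * (dist P Q * dist P S) = cross P Q S := by
  rw [dist_eq_norm_vsub', dist_eq_norm_vsub', EuclideanGeometry.oangle,
    Orientation.sin_oangle_mul_norm_mul_norm, Orientation.areaForm_to_volumeForm,
    Orientation.volumeForm_robust Module.Oriented.positiveOrientation
      (EuclideanSpace.basisFun (Fin 2) ℝ) rfl,
    Module.Basis.det_apply, Matrix.det_fin_two]
  simp [Module.Basis.toMatrix_apply, cross]
  ring

namespace ccw

variable {P Q S : ℝ²}

theorem rotate (h : ccw P Q S) : ccw Q S P := by
  unfold ccw at *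
  linarith

theorem oangle_sign (h : ccw P Q S) : (∡ Q P S).sign = 1 := by
  rw [Real.Angle.sign, sign_eq_one_iff]
  exact pos_of_mul_pos_left (by rw [sin_oangle_mul_dist_mul_dist]; exact h) (by positivity)

theorem oangle_eq_angle (h : ccw P Q S) : ∡ Q P S = ∠ Q P S :=
  oangle_eq_angle_of_sign_eq_one h.oangle_sign

theorem sin_angle_mul_dist_mul_dist (h : ccw P Q S) :
    sin (∠ Q P S) * (dist P Q * dist P S) = cross P Q S := by
  rw [← Real.Angle.sin_coe, ← h.oangle_eq_angle, sin_oangle_mul_dist_mul_dist]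

theorem sin_angle_pos (h : ccw P Q S) : 0 < sin (∠ Q P S) :=
  pos_of_mul_pos_left (by rw [h.sin_angle_mul_dist_mul_dist]; exact h) (by positivity)

theorem dist_mul_dist_pos (h : ccw P Q S) : 0 < dist P Q * dist P S :=
  pos_of_mul_pos_right (by rw [h.sin_angle_mul_dist_mul_dist]; exact h) h.sin_angle_pos.le

theorem angle_pos (h : ccw P Q S) : 0 < ∠ Q P S :=
  (angle_nonneg Q P S).lt_of_ne fun h0 => by simpa [← h0] using h.sin_angle_pos

theorem angle_lt_pi (h : ccw P Q S) : ∠ Q P S < π :=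
  (angle_le_pi Q P S).lt_of_ne fun hπ => by simpa [hπ] using h.sin_angle_pos

theorem angle_add_angle {X Y Z : ℝ²} (hXY : ccw P X Y) (hYZ : ccw P Y Z) (hXZ : ccw P X Z) :
    ∠ X P Y + ∠ Y P Z = ∠ X P Z := by
  have hadd := oangle_add (left_ne_of_oangle_sign_eq_one hXY.oangle_sign)
    (left_ne_of_oangle_sign_eq_one hYZ.oangle_sign)
    (right_ne_of_oangle_sign_eq_one hYZ.oangle_sign)
  rw [hXY.oangle_eq_angle, hYZ.oangle_eq_angle, hXZ.oangle_eq_angle, ← Real.Angle.coe_add] at hadd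
  -- the sum lies in `(0, 2π)` and has positive sine, so it lies in `(0, π)`
  have hlt : ∠ X P Y + ∠ Y P Z < π := by
    by_contra! hge
    have hsin := hXZ.sin_angle_pos
    rw [← Real.Angle.sin_coe, ← hadd, Real.Angle.sin_coe, ← sin_pi_sub, ← neg_neg (π - _),
      sin_neg] at hsin
    have := sin_nonneg_of_nonneg_of_le_pi (x := -(π - (∠ X P Y + ∠ Y P Z))) (by linarith)
      (by linarith [hXY.angle_lt_pi, hYZ.angle_lt_pi])
    linarith
  have := congrArg Real.Angle.toReal hadd
  rwa [Real.Angle.toReal_coe_eq_self_iff.2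
      ⟨by linarith [hXY.angle_pos, hYZ.angle_pos, pi_pos], hlt.le⟩,
    Real.Angle.toReal_coe_eq_self_iff.2
      ⟨by linarith [hXZ.angle_pos, pi_pos], hXZ.angle_lt_pi.le⟩] at this

theorem dist_eq_two_mul_radius_mul_sin {s : Sphere ℝ²} {V : ℝ²} (h : ccw P Q V) (hP : P ∈ s)
    (hQ : Q ∈ s) (hV : V ∈ s) : dist P Q = 2 * s.radius * sin (∠ P V Q) := by
  have h' : ccw V P Q := h.rotate.rotate
  have hsine := Sphere.dist_div_sin_oangle_eq_two_mul_radius hP hV hQ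
    (left_ne_of_oangle_sign_eq_one h'.oangle_sign)
    (left_ne_right_of_oangle_sign_eq_one h'.oangle_sign)
    (right_ne_of_oangle_sign_eq_one h'.oangle_sign).symm
  rw [h'.oangle_eq_angle, Real.Angle.sin_coe, abs_of_pos h'.sin_angle_pos,
    div_eq_iff h'.sin_angle_pos.ne'] at hsine
  exact hsine

end ccw

/-- The in-circle determinant `det [X - D, ‖X - D‖²]_{X = A, B, C}`, expanded along its last
column. -/
def inCircle (A B C D : ℝ²) : ℝ :=
  ((A 0 - D 0) ^ 2 + (A 1 - D 1) ^ 2) * cross D B C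
    - ((B 0 - D 0) ^ 2 + (B 1 - D 1) ^ 2) * cross D A C
    + ((C 0 - D 0) ^ 2 + (C 1 - D 1) ^ 2) * cross D A B

theorem inCircle_rotate (A B C D : ℝ²) : inCircle B C A D = inCircle A B C D := by
  unfold inCircle cross
  ring

theorem inCircle_swap_pairs (A B C D : ℝ²) : inCircle C D A B = inCircle A B C D := by
  unfold inCircle cross
  ring

theorem inCircle_eq_cross_mul {s : Sphere ℝ²} {A B C : ℝ²} (hA : A ∈ s) (hB : B ∈ s) (hC : C ∈ s)
    (D : ℝ²) : inCircle A B C D = cross A B C * (s.radius ^ 2 - dist D s.center ^ 2) := by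
  have hA' := mem_sphere.1 hA ▸ dist_sq_eq_fin_two A s.center
  have hB' := mem_sphere.1 hB ▸ dist_sq_eq_fin_two B s.center
  have hC' := mem_sphere.1 hC ▸ dist_sq_eq_fin_two C s.center
  rw [dist_sq_eq_fin_two]
  unfold inCircle
  linear_combination (norm := (unfold cross; ring))
    (-cross D B C) * hA' + cross D A C * hB' - cross D A B * hC'

theorem inCircle_neg_of_radius_lt_dist {s : Sphere ℝ²} {A B C D : ℝ²} (h : ccw A B C) (hA : A ∈ s)
    (hB : B ∈ s) (hC : C ∈ s) (hD : s.radius < dist D s.center) : inCircle A B C D < 0 := by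
  have hr : 0 ≤ s.radius := mem_sphere.1 hA ▸ dist_nonneg
  rw [inCircle_eq_cross_mul hA hB hC]
  exact mul_neg_of_pos_of_neg h (by nlinarith)

theorem angle_le_angle_of_inCircle_nonpos {P Q V W : ℝ²} (hV : ccw P Q V) (hW : ccw P Q W)
    (h : inCircle P Q V W ≤ 0) : ∠ P W Q ≤ ∠ P V Q := by
  have hV' : ccw V P Q := hV.rotate.rotate
  have hW' : ccw W P Q := hW.rotate.rotate
  have hsub : sin (∠ P V Q - ∠ P W Q) * ((dist V P * dist V Q) * (dist W P * dist W Q))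
      = -inCircle P Q V W := by
    calc _ = sin (∠ P V Q) * (dist V P * dist V Q) * (cos (∠ P W Q) * (dist W P * dist W Q))
          - cos (∠ P V Q) * (dist V P * dist V Q) * (sin (∠ P W Q) * (dist W P * dist W Q)) := by
          rw [sin_sub]; ring
      _ = -inCircle P Q V W := by
          rw [hV'.sin_angle_mul_dist_mul_dist, hW'.sin_angle_mul_dist_mul_dist,
            cos_angle_mul_dist_mul_dist, cos_angle_mul_dist_mul_dist]
          unfold inCircle cross
          ring
  have hdist := mul_pos hV'.dist_mul_dist_pos hW'.dist_mul_dist_pos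
  by_contra! hlt
  have := sin_neg_of_neg_of_neg_pi_lt (sub_neg.2 hlt) (by linarith [hV'.angle_pos, hW'.angle_lt_pi])
  nlinarith

theorem pi_lt_angle_add_angle_of_radius_lt {P Q V W : ℝ²} {s s' : Sphere ℝ²} (hV : ccw P Q V)
    (hW : ccw P Q W) (hin : inCircle P Q V W ≤ 0) (hPs : P ∈ s) (hQs : Q ∈ s) (hVs : V ∈ s)
    (hPs' : P ∈ s') (hQs' : Q ∈ s') (hWs' : W ∈ s') (hr : s'.radius < s.radius) :
    π < ∠ P V Q + ∠ P W Q := by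
  have hV' : ccw V P Q := hV.rotate.rotate
  have hW' : ccw W P Q := hW.rotate.rotate
  have hdV := hV.dist_eq_two_mul_radius_mul_sin hPs hQs hVs
  have hdW := hW.dist_eq_two_mul_radius_mul_sin hPs' hQs' hWs'
  have hPQ : 0 < dist P Q := dist_pos.2 (left_ne_right_of_oangle_sign_eq_one hV'.oangle_sign)
  have hsV := hV'.sin_angle_pos
  have hsW := hW'.sin_angle_pos
  refine pi_lt_add_of_sin_lt_sin hW'.angle_pos (angle_le_angle_of_inCircle_nonpos hV hW hin)
    hV'.angle_lt_pi ?_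
  have hr' : 0 < s'.radius := by nlinarith
  nlinarith [mul_pos (sub_pos.2 hr) hsW]

theorem min_radius_le_radius_of_inCircle_neg {A B C D : ℝ²} {sABC sACD sABD : Sphere ℝ²}
    (hconv : ccw A B C ∧ ccw B C D ∧ ccw C D A ∧ ccw D A B) (hin : inCircle A B C D < 0)
    (hABC : A ∈ sABC ∧ B ∈ sABC ∧ C ∈ sABC) (hACD : A ∈ sACD ∧ C ∈ sACD ∧ D ∈ sACD)
    (hABD : A ∈ sABD ∧ B ∈ sABD ∧ D ∈ sABD) :
    min sABC.radius sACD.radius ≤ sABD.radius := by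
  obtain ⟨h₁, h₂, h₃, h₄⟩ := hconv
  obtain ⟨hA₁, hB₁, hC₁⟩ := hABC
  obtain ⟨hA₂, hC₂, hD₂⟩ := hACD
  obtain ⟨hA₃, hB₃, hD₃⟩ := hABD
  by_contra! h
  rw [lt_min_iff] at h
  have hAB : π < ∠ A C B + ∠ A D B :=
    pi_lt_angle_add_angle_of_radius_lt h₁ h₄.rotate hin.le hA₁ hB₁ hC₁ hA₃ hB₃ hD₃ h.1
  have hDA : π < ∠ D C A + ∠ D B A :=
    pi_lt_angle_add_angle_of_radius_lt h₃.rotate h₄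
      (by rw [inCircle_rotate, inCircle_swap_pairs]; exact hin.le) hD₂ hA₂ hC₂ hD₃ hA₃ hB₃ h.2
  have hC : ∠ D C A + ∠ A C B = ∠ D C B := h₃.angle_add_angle h₁.rotate.rotate h₂.rotate
  have hABD :=
    angle_add_angle_add_angle_eq_pi B (left_ne_of_oangle_sign_eq_one h₄.oangle_sign).symm
  linarith [angle_le_pi D C B, angle_nonneg B A D]

theorem radius_le_max_radius_of_inCircle_neg {A B C D : ℝ²} {sABC sABD sBCD : Sphere ℝ²}
    (hconv : ccw A B C ∧ ccw B C D ∧ ccw C D A ∧ ccw D A B) (hin : inCircle A B C D < 0)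
    (hABC : A ∈ sABC ∧ B ∈ sABC ∧ C ∈ sABC) (hABD : A ∈ sABD ∧ B ∈ sABD ∧ D ∈ sABD)
    (hBCD : B ∈ sBCD ∧ C ∈ sBCD ∧ D ∈ sBCD) :
    sABC.radius ≤ max sABD.radius sBCD.radius := by
  obtain ⟨h₁, h₂, h₃, h₄⟩ := hconv
  obtain ⟨hA₁, hB₁, hC₁⟩ := hABC
  obtain ⟨hA₃, hB₃, hD₃⟩ := hABD
  obtain ⟨hB₄, hC₄, hD₄⟩ := hBCD
  by_contra! h
  rw [max_lt_iff] at h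
  have hAB : π < ∠ A C B + ∠ A D B :=
    pi_lt_angle_add_angle_of_radius_lt h₁ h₄.rotate hin.le hA₁ hB₁ hC₁ hA₃ hB₃ hD₃ h.1
  have hBC : π < ∠ B A C + ∠ B D C :=
    pi_lt_angle_add_angle_of_radius_lt h₁.rotate h₂ (by rw [inCircle_rotate]; exact hin.le)
      hB₁ hC₁ hA₁ hB₄ hC₄ hD₄ h.2
  have hD : ∠ A D B + ∠ B D C = ∠ A D C := h₄.angle_add_angle h₂.rotate.rotate h₃.rotate
  have hABC := angle_add_angle_add_angle_eq_pi B (right_ne_of_oangle_sign_eq_one h₁.oangle_sign)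
  linarith [angle_le_pi A D C, angle_nonneg C B A]

noncomputable def circumcircle {A B C : ℝ²} (h : AffineIndependent ℝ ![A, B, C]) : Sphere ℝ² :=
  (⟨![A, B, C], h⟩ : Affine.Triangle ℝ ℝ²).circumsphere

theorem mem_circumcircle {A B C : ℝ²} (h : AffineIndependent ℝ ![A, B, C]) :
    A ∈ circumcircle h ∧ B ∈ circumcircle h ∧ C ∈ circumcircle h :=
  ⟨Affine.Simplex.mem_circumsphere _ 0, Affine.Simplex.mem_circumsphere _ 1,
    Affine.Simplex.mem_circumsphere _ 2⟩

/-- If `ABCD` is a convex quadrilateral and `D` lies strictly outside the circumcircle of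
`ABC` (so that diagonal `AC` is Delaunay), then the circumradii of the Delaunay pair are
dominated elementwise: `min(R_ABC, R_ACD) ≤ min(R_ABD, R_BCD)` and
`max(R_ABC, R_ACD) ≤ max(R_ABD, R_BCD)`. -/
theorem delaunay_circumradii_min_max (A B C D : EuclideanSpace ℝ (Fin 2))
    (hconv : ccw A B C ∧ ccw B C D ∧ ccw C D A ∧ ccw D A B)
    (hABC : AffineIndependent ℝ ![A, B, C]) (hACD : AffineIndependent ℝ ![A, C, D])
    (hABD : AffineIndependent ℝ ![A, B, D]) (hBCD : AffineIndependent ℝ ![B, C, D])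
    (hDelaunay : dist D (circumCtr hABC) > circumRad hABC) :
    min (circumRad hABC) (circumRad hACD) ≤ min (circumRad hABD) (circumRad hBCD) ∧
      max (circumRad hABC) (circumRad hACD) ≤ max (circumRad hABD) (circumRad hBCD) := by
  obtain ⟨hA₁, hB₁, hC₁⟩ := mem_circumcircle hABC
  obtain ⟨hA₂, hC₂, hD₂⟩ := mem_circumcircle hACD
  obtain ⟨hA₃, hB₃, hD₃⟩ := mem_circumcircle hABD
  obtain ⟨hB₄, hC₄, hD₄⟩ := mem_circumcircle hBCD
  have hin : inCircle A B C D < 0 := inCircle_neg_of_radius_lt_dist hconv.1 hA₁ hB₁ hC₁ hDelaunay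
  -- relabelling `ABCD` as `CDAB` swaps the two Delaunay triangles and the two others
  have hin' : inCircle C D A B < 0 := by rwa [inCircle_swap_pairs]
  have hconv' : ccw C D A ∧ ccw D A B ∧ ccw A B C ∧ ccw B C D :=
    ⟨hconv.2.2.1, hconv.2.2.2, hconv.1, hconv.2.1⟩
  refine ⟨le_min ?_ ?_, max_le ?_ ?_⟩
  · exact min_radius_le_radius_of_inCircle_neg hconv hin
      ⟨hA₁, hB₁, hC₁⟩ ⟨hA₂, hC₂, hD₂⟩ ⟨hA₃, hB₃, hD₃⟩
  · rw [min_comm]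
    exact min_radius_le_radius_of_inCircle_neg hconv' hin'
      ⟨hC₂, hD₂, hA₂⟩ ⟨hC₁, hA₁, hB₁⟩ ⟨hC₄, hD₄, hB₄⟩
  · exact radius_le_max_radius_of_inCircle_neg hconv hin
      ⟨hA₁, hB₁, hC₁⟩ ⟨hA₃, hB₃, hD₃⟩ ⟨hB₄, hC₄, hD₄⟩
  · rw [max_comm]
    exact radius_le_max_radius_of_inCircle_neg hconv' hin'
      ⟨hC₂, hD₂, hA₂⟩ ⟨hC₄, hD₄, hB₄⟩ ⟨hD₃, hA₃, hB₃⟩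
end

section
/- Let ABCD be a convex quadrilateral whose Delaunay triangulation uses diagonal BD (i.e., C is outside the circumcircle of ABD and A is outside the circumcircle of BCD). Then for every increasing function φ: ℝ → ℝ, φ(R_{ABD}) + φ(R_{BCD}) ≤ φ(R_{ABC}) + φ(R_{ACD}), where R_{XYZ} is the circumradius of triangle XYZ. -/
set_option maxHeartbeats 1600000 in
/-- Key geometric lemma, in coordinates.  `X`, `Y`, `P`, `Q` are points with `P`, `Q`
strictly on the same (left) side of the segment `XY`; `O` is the circumcenter of `XYP`
(circumradius `r`), `U` is the circumcenter of `XYQ` (circumradius `s`).  If `Q` lies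
strictly outside the circle `(O, r)` and `s < r`, then the angle of triangle `XYP`
at `P` is obtuse. -/
lemma delaunayKey_scalar (x0 x1 y0 y1 p0 p1 q0 q1 o0 o1 u0 u1 r s : ℝ)
    (hs : 0 ≤ s)
    (hxo : (x0-o0)^2+(x1-o1)^2 = r^2)
    (hyo : (y0-o0)^2+(y1-o1)^2 = r^2)
    (hpo : (p0-o0)^2+(p1-o1)^2 = r^2)
    (hxu : (x0-u0)^2+(x1-u1)^2 = s^2)
    (hyu : (y0-u0)^2+(y1-u1)^2 = s^2)
    (hqu : (q0-u0)^2+(q1-u1)^2 = s^2)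
    (hout : r^2 < (q0-o0)^2+(q1-o1)^2)
    (hcp : 0 < (y0-x0)*(p1-x1) - (y1-x1)*(p0-x0))
    (hcq : 0 < (y0-x0)*(q1-x1) - (y1-x1)*(q0-x0))
    (hrs : s < r) :
    (x0-p0)*(y0-p0) + (x1-p1)*(y1-p1) < 0 := by
  obtain ⟨e, heq⟩ : ∃ t, t = (y0-x0)^2+(y1-x1)^2 := ⟨_, rfl⟩
  obtain ⟨A, hA⟩ : ∃ t, t = (y0-x0)*(o1-x1) - (y1-x1)*(o0-x0) := ⟨_, rfl⟩
  obtain ⟨A', hA'⟩ : ∃ t, t = (y0-x0)*(u1-x1) - (y1-x1)*(u0-x0) := ⟨_, rfl⟩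
  have he : 0 < e := by
    rw [heq]
    rcases eq_or_ne (y0 - x0) 0 with h0 | h0
    · rcases eq_or_ne (y1 - x1) 0 with h1 | h1
      · rw [h0, h1] at hcq; simp at hcq
      · have h2 : 0 < (y1 - x1)^2 := by positivity
        nlinarith [sq_nonneg (y0 - x0)]
    · have h2 : 0 < (y0 - x0)^2 := by positivity
      nlinarith [sq_nonneg (y1 - x1)]
  -- both centers lie on the perpendicular bisector of XY
  have F1 : (y0-x0)*(o0-x0)+(y1-x1)*(o1-x1) = e/2 := by
    rw [heq]; linear_combination (hxo - hyo)/2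
  have F2 : (y0-x0)*(u0-x0)+(y1-x1)*(u1-x1) = e/2 := by
    rw [heq]; linear_combination (hxu - hyu)/2
  have G1 : e*(o0-x0) = (y0-x0)*e/2 - (y1-x1)*A := by
    linear_combination (y0-x0)*F1 + (o0-x0)*heq + (y1-x1)*hA
  have G2 : e*(o1-x1) = (y1-x1)*e/2 + (y0-x0)*A := by
    linear_combination (y1-x1)*F1 + (o1-x1)*heq - (y0-x0)*hA
  have G1' : e*(u0-x0) = (y0-x0)*e/2 - (y1-x1)*A' := by
    linear_combination (y0-x0)*F2 + (u0-x0)*heq + (y1-x1)*hA'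
  have G2' : e*(u1-x1) = (y1-x1)*e/2 + (y0-x0)*A' := by
    linear_combination (y1-x1)*F2 + (u1-x1)*heq - (y0-x0)*hA'
  -- radius formulas along the bisector
  have her : e*r^2 = e^2/4 + A^2 := by
    refine mul_left_cancel₀ he.ne' ?_
    linear_combination (-(e^2))*hxo
      + (e*(o0-x0) + ((y0-x0)*e/2 - (y1-x1)*A))*G1
      + (e*(o1-x1) + ((y1-x1)*e/2 + (y0-x0)*A))*G2
      - (e^2/4 + A^2)*heq
  have hes : e*s^2 = e^2/4 + A'^2 := by
    refine mul_left_cancel₀ he.ne' ?_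
    linear_combination (-(e^2))*hxu
      + (e*(u0-x0) + ((y0-x0)*e/2 - (y1-x1)*A'))*G1'
      + (e*(u1-x1) + ((y1-x1)*e/2 + (y0-x0)*A'))*G2'
      - (e^2/4 + A'^2)*heq
  -- the power of the point Q forces A < A'
  have hpow : (q0-o0)^2+(q1-o1)^2 - r^2 = 2*((q0-x0)*(u0-o0) + (q1-x1)*(u1-o1)) := by
    linear_combination hxo - hxu + hqu
  have hpow2 : e*((q0-o0)^2+(q1-o1)^2 - r^2)
      = 2*(A'-A)*((y0-x0)*(q1-x1) - (y1-x1)*(q0-x0)) := by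
    linear_combination e*hpow + 2*(q0-x0)*(G1' - G1) + 2*(q1-x1)*(G2' - G2)
  have hAA : A < A' := by
    have h1 : 0 < e*((q0-o0)^2+(q1-o1)^2 - r^2) := mul_pos he (by linarith)
    rw [hpow2] at h1
    rcases lt_or_ge A A' with h | h
    · exact h
    · exfalso
      have h2 : 2*(A'-A)*((y0-x0)*(q1-x1) - (y1-x1)*(q0-x0)) ≤ 0 :=
        mul_nonpos_of_nonpos_of_nonneg (by linarith) (le_of_lt hcq)
      linarith
  -- since r > s, A must be negative
  have hAneg : A < 0 := by
    have hr2 : 0 < r^2 - s^2 := by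
      have h4 : 0 < (r-s)*(r+s) := mul_pos (by linarith) (by linarith)
      have h5 : (r-s)*(r+s) = r^2 - s^2 := by ring
      linarith
    have h3 : 0 < e*r^2 - e*s^2 := by
      have h4 := mul_pos he hr2
      have h5 : e*(r^2 - s^2) = e*r^2 - e*s^2 := by ring
      linarith
    have hA2 : A'^2 < A^2 := by linarith
    rcases lt_or_ge A 0 with h | h
    · exact h
    · exact absurd (pow_lt_pow_left₀ hAA h two_ne_zero) (not_lt.mpr hA2.le)
  -- conclusion
  have hB : e*((x0-p0)*(y0-p0) + (x1-p1)*(y1-p1))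
      = 2*A*((y0-x0)*(p1-x1) - (y1-x1)*(p0-x0)) := by
    have hP : ((x0-p0)*(y0-p0) + (x1-p1)*(y1-p1)) =
        2*((p0-x0)*(o0-x0)+(p1-x1)*(o1-x1))
          - ((p0-x0)*(y0-x0)+(p1-x1)*(y1-x1)) := by
      linear_combination hpo - hxo
    linear_combination e*hP + 2*(p0-x0)*G1 + 2*(p1-x1)*G2
  have hfin : e*((x0-p0)*(y0-p0) + (x1-p1)*(y1-p1)) < 0 := by
    rw [hB]; exact mul_neg_of_neg_of_pos (by linarith) hcp
  by_contra hcon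
  push_neg at hcon
  exact absurd hfin (not_lt.mpr (mul_nonneg he.le hcon))

/-- A fan of three rays `u`, `v`, `w` out of one vertex, with `(u,v)`, `(v,w)` and
`(u,w)` all positively oriented, cannot have both consecutive angles obtuse. -/
lemma delaunayFan (u0 u1 v0 v1 w0 w1 : ℝ)
    (cuv : 0 < u0*v1 - u1*v0) (cvw : 0 < v0*w1 - v1*w0)
    (cuw : 0 < u0*w1 - u1*w0)
    (duv : u0*v0 + u1*v1 < 0) (dvw : v0*w0 + v1*w1 < 0) : False := by
  have hv : 0 < v0^2 + v1^2 := by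
    rcases eq_or_ne v0 0 with h0 | h0
    · rcases eq_or_ne v1 0 with h1 | h1
      · rw [h0, h1] at cuv; simp at cuv
      · have : 0 < v1^2 := by positivity
        nlinarith [sq_nonneg v0]
    · have : 0 < v0^2 := by positivity
      nlinarith [sq_nonneg v1]
  have key : (u0*v0 + u1*v1)*(v0*w1 - v1*w0) + (u0*v1 - u1*v0)*(v0*w0 + v1*w1)
      = (v0^2 + v1^2)*(u0*w1 - u1*w0) := by ring
  have h1 : (u0*v0 + u1*v1)*(v0*w1 - v1*w0) < 0 := mul_neg_of_neg_of_pos duv cvw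
  have h2 : (u0*v1 - u1*v0)*(v0*w0 + v1*w1) < 0 := mul_neg_of_pos_of_neg cuv dvw
  have h3 : 0 < (v0^2 + v1^2)*(u0*w1 - u1*w0) := mul_pos hv cuw
  linarith

lemma delaunay_dist_sq_coord (x y : EuclideanSpace ℝ (Fin 2)) :
    (x 0 - y 0)^2 + (x 1 - y 1)^2 = dist x y ^ 2 := by
  rw [EuclideanSpace.dist_eq, Real.sq_sqrt (by positivity)]
  simp [Fin.sum_univ_two, Real.dist_eq, sq_abs]

lemma delaunay_on_circle {X O : EuclideanSpace ℝ (Fin 2)} {r : ℝ} (h : dist X O = r) :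
    (X 0 - O 0)^2 + (X 1 - O 1)^2 = r^2 := by
  rw [delaunay_dist_sq_coord, h]

lemma delaunay_out_circle {X O : EuclideanSpace ℝ (Fin 2)} {r : ℝ} (hr : 0 ≤ r)
    (h : dist X O > r) : r^2 < (X 0 - O 0)^2 + (X 1 - O 1)^2 := by
  rw [delaunay_dist_sq_coord]
  exact pow_lt_pow_left₀ h hr two_ne_zero

lemma delaunay_tri_facts {A B C : EuclideanSpace ℝ (Fin 2)}
    (h : AffineIndependent ℝ ![A, B, C]) :
    dist A (circumCtr h) = circumRad h ∧ dist B (circumCtr h) = circumRad h ∧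
      dist C (circumCtr h) = circumRad h :=
  ⟨(⟨![A, B, C], h⟩ : Affine.Simplex ℝ (EuclideanSpace ℝ (Fin 2)) 2).dist_circumcenter_eq_circumradius 0,
   (⟨![A, B, C], h⟩ : Affine.Simplex ℝ (EuclideanSpace ℝ (Fin 2)) 2).dist_circumcenter_eq_circumradius 1,
   (⟨![A, B, C], h⟩ : Affine.Simplex ℝ (EuclideanSpace ℝ (Fin 2)) 2).dist_circumcenter_eq_circumradius 2⟩

/-- If the Delaunay triangulation of a convex quadrilateral `ABCD` uses diagonal `BD`,
then for every increasing `φ : ℝ → ℝ`,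
`φ(R_ABD) + φ(R_BCD) ≤ φ(R_ABC) + φ(R_ACD)`. -/
theorem delaunay_circumradii_phi_sum (A B C D : EuclideanSpace ℝ (Fin 2))
    (hconv : ccw A B C ∧ ccw B C D ∧ ccw C D A ∧ ccw D A B)
    (hABC : AffineIndependent ℝ ![A, B, C]) (hACD : AffineIndependent ℝ ![A, C, D])
    (hABD : AffineIndependent ℝ ![A, B, D]) (hBCD : AffineIndependent ℝ ![B, C, D])
    (hDel₁ : dist C (circumCtr hABD) > circumRad hABD)
    (hDel₂ : dist A (circumCtr hBCD) > circumRad hBCD) :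
    ∀ φ : ℝ → ℝ, Monotone φ →
      φ (circumRad hABD) + φ (circumRad hBCD) ≤ φ (circumRad hABC) + φ (circumRad hACD) := by
  intro φ hφ
  obtain ⟨c1, c2, c3, c4⟩ := hconv
  have cc_ABC : 0 < (B 0 - A 0)*(C 1 - A 1) - (B 1 - A 1)*(C 0 - A 0) := c1
  have cc_BCD : 0 < (C 0 - B 0)*(D 1 - B 1) - (C 1 - B 1)*(D 0 - B 0) := c2
  have cc_CDA : 0 < (D 0 - C 0)*(A 1 - C 1) - (D 1 - C 1)*(A 0 - C 0) := c3
  have cc_DAB : 0 < (A 0 - D 0)*(B 1 - D 1) - (A 1 - D 1)*(B 0 - D 0) := c4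
  have cc_ABD : 0 < (B 0 - A 0)*(D 1 - A 1) - (B 1 - A 1)*(D 0 - A 0) :=
    cc_DAB.trans_eq (by ring)
  have cc_DAC : 0 < (A 0 - D 0)*(C 1 - D 1) - (A 1 - D 1)*(C 0 - D 0) :=
    cc_CDA.trans_eq (by ring)
  have cc_BCA : 0 < (C 0 - B 0)*(A 1 - B 1) - (C 1 - B 1)*(A 0 - B 0) :=
    cc_ABC.trans_eq (by ring)
  have cc_CDB : 0 < (D 0 - C 0)*(B 1 - C 1) - (D 1 - C 1)*(B 0 - C 0) :=
    cc_BCD.trans_eq (by ring)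
  have cc_DBC : 0 < (B 0 - D 0)*(C 1 - D 1) - (B 1 - D 1)*(C 0 - D 0) :=
    cc_BCD.trans_eq (by ring)
  have cc_BDA : 0 < (D 0 - B 0)*(A 1 - B 1) - (D 1 - B 1)*(A 0 - B 0) :=
    cc_DAB.trans_eq (by ring)
  -- circumcenters and circumradii
  obtain ⟨dAO1, dBO1, dDO1⟩ := delaunay_tri_facts hABD
  obtain ⟨dBO2, dCO2, dDO2⟩ := delaunay_tri_facts hBCD
  obtain ⟨dAU1, dBU1, dCU1⟩ := delaunay_tri_facts hABC
  obtain ⟨dAU2, dCU2, dDU2⟩ := delaunay_tri_facts hACD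
  set r1 := circumRad hABD with hr1def
  set r2 := circumRad hBCD with hr2def
  set s1 := circumRad hABC with hs1def
  set s2 := circumRad hACD with hs2def
  set O1 := circumCtr hABD with hO1def
  set O2 := circumCtr hBCD with hO2def
  set U1 := circumCtr hABC with hU1def
  set U2 := circumCtr hACD with hU2def
  have hs1n : 0 ≤ s1 := dAU1 ▸ dist_nonneg
  have hs2n : 0 ≤ s2 := dAU2 ▸ dist_nonneg
  have hr1n : 0 ≤ r1 := dAO1 ▸ dist_nonneg
  have hr2n : 0 ≤ r2 := dBO2 ▸ dist_nonneg
  have eAO1 := delaunay_on_circle dAO1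
  have eBO1 := delaunay_on_circle dBO1
  have eDO1 := delaunay_on_circle dDO1
  have eBO2 := delaunay_on_circle dBO2
  have eCO2 := delaunay_on_circle dCO2
  have eDO2 := delaunay_on_circle dDO2
  have eAU1 := delaunay_on_circle dAU1
  have eBU1 := delaunay_on_circle dBU1
  have eCU1 := delaunay_on_circle dCU1
  have eAU2 := delaunay_on_circle dAU2
  have eCU2 := delaunay_on_circle dCU2
  have eDU2 := delaunay_on_circle dDU2
  have outC : r1^2 < (C 0 - O1 0)^2 + (C 1 - O1 1)^2 := delaunay_out_circle hr1n hDel₁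
  have outA : r2^2 < (A 0 - O2 0)^2 + (A 1 - O2 1)^2 := delaunay_out_circle hr2n hDel₂
  -- the four flip inequalities (each by contradiction with the key lemma)
  have hd1 : r1 ≤ s1 ∨ r1 ≤ s2 := by
    by_contra hcon
    push_neg at hcon
    obtain ⟨h1, h2⟩ := hcon
    have app1 := delaunayKey_scalar (A 0) (A 1) (B 0) (B 1) (D 0) (D 1) (C 0) (C 1)
      (O1 0) (O1 1) (U1 0) (U1 1) r1 s1 hs1n eAO1 eBO1 eDO1 eAU1 eBU1 eCU1 outC
      cc_ABD cc_ABC h1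
    have app2 := delaunayKey_scalar (D 0) (D 1) (A 0) (A 1) (B 0) (B 1) (C 0) (C 1)
      (O1 0) (O1 1) (U2 0) (U2 1) r1 s2 hs2n eDO1 eAO1 eBO1 eDU2 eAU2 eCU2 outC
      cc_DAB cc_DAC h2
    have idD1 : (D 0 - B 0)*(A 0 - B 0) + (D 1 - B 1)*(A 1 - B 1)
        = (B 0 - D 0)^2 + (B 1 - D 1)^2
          - ((A 0 - D 0)*(B 0 - D 0) + (A 1 - D 1)*(B 1 - D 1)) := by ring
    have := sq_nonneg (B 0 - D 0)
    have := sq_nonneg (B 1 - D 1)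
    linarith
  have hd2 : r2 ≤ s1 ∨ r2 ≤ s2 := by
    by_contra hcon
    push_neg at hcon
    obtain ⟨h1, h2⟩ := hcon
    have app3 := delaunayKey_scalar (B 0) (B 1) (C 0) (C 1) (D 0) (D 1) (A 0) (A 1)
      (O2 0) (O2 1) (U1 0) (U1 1) r2 s1 hs1n eBO2 eCO2 eDO2 eBU1 eCU1 eAU1 outA
      cc_BCD cc_BCA h1
    have app4 := delaunayKey_scalar (C 0) (C 1) (D 0) (D 1) (B 0) (B 1) (A 0) (A 1)
      (O2 0) (O2 1) (U2 0) (U2 1) r2 s2 hs2n eCO2 eDO2 eBO2 eCU2 eDU2 eAU2 outA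
      cc_CDB cc_CDA h2
    have idD2 : (C 0 - B 0)*(D 0 - B 0) + (C 1 - B 1)*(D 1 - B 1)
        = (B 0 - D 0)^2 + (B 1 - D 1)^2
          - ((B 0 - D 0)*(C 0 - D 0) + (B 1 - D 1)*(C 1 - D 1)) := by ring
    have := sq_nonneg (B 0 - D 0)
    have := sq_nonneg (B 1 - D 1)
    linarith
  have hd3 : r1 ≤ s1 ∨ r2 ≤ s1 := by
    by_contra hcon
    push_neg at hcon
    obtain ⟨h1, h2⟩ := hcon
    have app1 := delaunayKey_scalar (A 0) (A 1) (B 0) (B 1) (D 0) (D 1) (C 0) (C 1)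
      (O1 0) (O1 1) (U1 0) (U1 1) r1 s1 hs1n eAO1 eBO1 eDO1 eAU1 eBU1 eCU1 outC
      cc_ABD cc_ABC h1
    have app3 := delaunayKey_scalar (B 0) (B 1) (C 0) (C 1) (D 0) (D 1) (A 0) (A 1)
      (O2 0) (O2 1) (U1 0) (U1 1) r2 s1 hs1n eBO2 eCO2 eDO2 eBU1 eCU1 eAU1 outA
      cc_BCD cc_BCA h2
    exact delaunayFan (A 0 - D 0) (A 1 - D 1) (B 0 - D 0) (B 1 - D 1)
      (C 0 - D 0) (C 1 - D 1) cc_DAB cc_DBC cc_DAC app1 app3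
  have hd4 : r1 ≤ s2 ∨ r2 ≤ s2 := by
    by_contra hcon
    push_neg at hcon
    obtain ⟨h1, h2⟩ := hcon
    have app2 := delaunayKey_scalar (D 0) (D 1) (A 0) (A 1) (B 0) (B 1) (C 0) (C 1)
      (O1 0) (O1 1) (U2 0) (U2 1) r1 s2 hs2n eDO1 eAO1 eBO1 eDU2 eAU2 eCU2 outC
      cc_DAB cc_DAC h1
    have app4 := delaunayKey_scalar (C 0) (C 1) (D 0) (D 1) (B 0) (B 1) (A 0) (A 1)
      (O2 0) (O2 1) (U2 0) (U2 1) r2 s2 hs2n eCO2 eDO2 eBO2 eCU2 eDU2 eAU2 outA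
      cc_CDB cc_CDA h2
    exact delaunayFan (C 0 - B 0) (C 1 - B 1) (D 0 - B 0) (D 1 - B 1)
      (A 0 - B 0) (A 1 - B 1) cc_BCD cc_BDA cc_BCA app4 app2
  -- sorted-pair domination
  have hmax : max r1 r2 ≤ max s1 s2 := by
    refine max_le ?_ ?_
    · rcases hd1 with h | h
      · exact h.trans (le_max_left _ _)
      · exact h.trans (le_max_right _ _)
    · rcases hd2 with h | h
      · exact h.trans (le_max_left _ _)
      · exact h.trans (le_max_right _ _)
  have hmin : min r1 r2 ≤ min s1 s2 := by
    refine le_min ?_ ?_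
    · rcases hd3 with h | h
      · exact (min_le_left _ _).trans h
      · exact (min_le_right _ _).trans h
    · rcases hd4 with h | h
      · exact (min_le_left _ _).trans h
      · exact (min_le_right _ _).trans h
  -- conclude for monotone φ
  have e1 : φ r1 + φ r2 = φ (min r1 r2) + φ (max r1 r2) := by
    rcases le_total r1 r2 with h | h
    · rw [min_eq_left h, max_eq_right h]
    · rw [min_eq_right h, max_eq_left h, add_comm]
  have e2 : φ s1 + φ s2 = φ (min s1 s2) + φ (max s1 s2) := by
    rcases le_total s1 s2 with h | h
    · rw [min_eq_left h, max_eq_right h]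
    · rw [min_eq_right h, max_eq_left h, add_comm]
  rw [e1, e2]
  exact add_le_add (hφ hmin) (hφ hmax)
end

section
/- Let ABCD be a convex quadrilateral whose Delaunay triangulation uses diagonal BD. Then hrm(ABD) + hrm(BCD) ≤ hrm(ABC) + hrm(ACD), where hrm of a triangle is the sum of the squares of its side lengths divided by its area. -/
/-- The area of the planar triangle `ABC`. -/
noncomputable def triArea (A B C : EuclideanSpace ℝ (Fin 2)) : ℝ :=
  |((B 0 - A 0) * (C 1 - A 1) - (B 1 - A 1) * (C 0 - A 0))| / 2

/-- The harmonic index of a triangle: sum of squares of side lengths over area. -/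
noncomputable def triHrm (A B C : EuclideanSpace ℝ (Fin 2)) : ℝ :=
  (dist A B ^ 2 + dist B C ^ 2 + dist C A ^ 2) / triArea A B C

/-! With `S₁, S₂, S₃, S₄` the doubled signed areas of `ABD, BCD, ABC, ACD`, clearing
denominators gives the identity
  `hrm ABC + hrm ACD - (hrm ABD + hrm BCD)`
    `= 4 Δ (S₁² + S₁ S₂ + S₂² - S₃ S₄) / (S₁ S₂ S₃ S₄)`,
where `Δ` is the incircle determinant of `ABCD`. Since `A, B, D` lie on a circle, `Δ` is `S₁`
times the power of `C` with respect to that circle, which is positive by the Delaunay condition.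
Since `S₁ + S₂ = S₃ + S₄` (both are twice the area of `ABCD`), AM-GM gives
`S₃ S₄ ≤ ((S₁ + S₂) / 2)² ≤ S₁² + S₁ S₂ + S₂²`. -/

lemma mul_le_sq_add_mul_add_sq_of_add_eq {a b c d : ℝ} (h : c + d = a + b) :
    c * d ≤ a ^ 2 + a * b + b ^ 2 := by
  obtain rfl : d = a + b - c := by linarith
  nlinarith [sq_nonneg (2 * c - a - b), sq_nonneg (a - b), sq_nonneg (a + b)]

section

variable {A B C D : EuclideanSpace ℝ (Fin 2)}

def orient (A B C : EuclideanSpace ℝ (Fin 2)) : ℝ :=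
  (B 0 - A 0) * (C 1 - A 1) - (B 1 - A 1) * (C 0 - A 0)

def incircleDet (A B C D : EuclideanSpace ℝ (Fin 2)) : ℝ :=
  orient B C D * (A 0 ^ 2 + A 1 ^ 2) + orient A B D * (C 0 ^ 2 + C 1 ^ 2)
    - orient A C D * (B 0 ^ 2 + B 1 ^ 2) - orient A B C * (D 0 ^ 2 + D 1 ^ 2)

lemma ccw_iff_orient_pos : ccw A B C ↔ 0 < orient A B C := Iff.rfl

lemma ccw.rotate_s9 (h : ccw A B C) : ccw B C A := by
  unfold ccw at *; linarith

lemma orient_add_orient (A B C D : EuclideanSpace ℝ (Fin 2)) :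
    orient A B D + orient B C D = orient A B C + orient A C D := by
  unfold orient; ring

lemma dist_sq_eq_coord (X Y : EuclideanSpace ℝ (Fin 2)) :
    dist X Y ^ 2 = (X 0 - Y 0) ^ 2 + (X 1 - Y 1) ^ 2 := by
  simp [EuclideanSpace.dist_sq_eq, Fin.sum_univ_two, Real.dist_eq, sq_abs]

lemma dist_circumCtr (h : AffineIndependent ℝ ![A, B, C]) (i : Fin 3) :
    dist (![A, B, C] i) (circumCtr h) = circumRad h :=
  Affine.Simplex.dist_circumcenter_eq_circumradius
    (⟨![A, B, C], h⟩ : Affine.Simplex ℝ (EuclideanSpace ℝ (Fin 2)) 2) i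

lemma triHrm_eq_of_ccw (h : ccw A B C) :
    triHrm A B C = 2 * (dist A B ^ 2 + dist B C ^ 2 + dist C A ^ 2) / orient A B C := by
  rw [triHrm, triArea, abs_of_pos h]
  field_simp
  rfl

lemma incircleDet_eq_power {O : EuclideanSpace ℝ (Fin 2)} {r : ℝ} (hA : dist A O = r)
    (hB : dist B O = r) (hD : dist D O = r) :
    incircleDet A B C D = orient A B D * (dist C O ^ 2 - r ^ 2) := by
  have hA₂ : (A 0 - O 0) ^ 2 + (A 1 - O 1) ^ 2 = r ^ 2 := by rw [← dist_sq_eq_coord, hA]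
  have hB₂ : (B 0 - O 0) ^ 2 + (B 1 - O 1) ^ 2 = r ^ 2 := by rw [← dist_sq_eq_coord, hB]
  have hD₂ : (D 0 - O 0) ^ 2 + (D 1 - O 1) ^ 2 = r ^ 2 := by rw [← dist_sq_eq_coord, hD]
  rw [dist_sq_eq_coord]
  unfold incircleDet
  linear_combination (norm := skip)
    orient B C D * hA₂ - orient A C D * hB₂ - orient A B C * hD₂
  unfold orient
  ring

theorem triHrm_add_sub_triHrm_add (hABC : ccw A B C) (hACD : ccw A C D)
    (hABD : ccw A B D) (hBCD : ccw B C D) :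
    triHrm A B C + triHrm A C D - (triHrm A B D + triHrm B C D) =
      4 * incircleDet A B C D *
        (orient A B D ^ 2 + orient A B D * orient B C D + orient B C D ^ 2
          - orient A B C * orient A C D) /
        (orient A B D * orient B C D * orient A B C * orient A C D) := by
  rw [triHrm_eq_of_ccw hABC, triHrm_eq_of_ccw hACD, triHrm_eq_of_ccw hABD,
    triHrm_eq_of_ccw hBCD]
  rw [ccw_iff_orient_pos] at *
  field_simp
  simp only [dist_sq_eq_coord, incircleDet, orient]
  ring

end

theorem delaunay_harmonic_index_le_general (A B C D : EuclideanSpace ℝ (Fin 2))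
    (hconv : ccw A B C ∧ ccw B C D ∧ ccw C D A ∧ ccw D A B)
    (hABD : AffineIndependent ℝ ![A, B, D])
    (hDel₁ : dist C (circumCtr hABD) > circumRad hABD) :
    triHrm A B D + triHrm B C D ≤ triHrm A B C + triHrm A C D := by
  obtain ⟨hABC, hBCD, hCDA, hDAB⟩ := hconv
  have hABD' : ccw A B D := hDAB.rotate_s9
  have hACD : ccw A C D := hCDA.rotate_s9.rotate_s9
  have hr : 0 ≤ circumRad hABD := dist_circumCtr hABD 0 ▸ dist_nonneg
  have hpower : 0 < dist C (circumCtr hABD) ^ 2 - circumRad hABD ^ 2 :=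
    sub_pos.2 (pow_lt_pow_left₀ hDel₁ hr two_ne_zero)
  have hincircle : 0 < incircleDet A B C D := by
    rw [incircleDet_eq_power (A := A) (B := B) (D := D) (dist_circumCtr hABD 0)
      (dist_circumCtr hABD 1) (dist_circumCtr hABD 2)]
    exact mul_pos hABD' hpower
  have hquad :=
    sub_nonneg.2 (mul_le_sq_add_mul_add_sq_of_add_eq (orient_add_orient A B C D).symm)
  rw [← sub_nonneg, triHrm_add_sub_triHrm_add hABC hACD hABD' hBCD]
  exact div_nonneg (mul_nonneg (by linarith) hquad)
    (mul_pos (mul_pos (mul_pos hABD' hBCD) hABC) hACD).le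

/-- If the Delaunay triangulation of a convex quadrilateral `ABCD` uses diagonal `BD`,
then `hrm(ABD) + hrm(BCD) ≤ hrm(ABC) + hrm(ACD)`. -/
theorem delaunay_harmonic_index_le (A B C D : EuclideanSpace ℝ (Fin 2))
    (hconv : ccw A B C ∧ ccw B C D ∧ ccw C D A ∧ ccw D A B)
    (hABD : AffineIndependent ℝ ![A, B, D]) (hBCD : AffineIndependent ℝ ![B, C, D])
    (hDel₁ : dist C (circumCtr hABD) > circumRad hABD)
    (hDel₂ : dist A (circumCtr hBCD) > circumRad hBCD) :
    triHrm A B D + triHrm B C D ≤ triHrm A B C + triHrm A C D :=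
  delaunay_harmonic_index_le_general A B C D hconv hABD hDel₁
end

section
/- Let t₁ and t₂ be the two triangulations of a convex quadrilateral Q = conv{A,B,C,D} ⊂ ℝ², by diagonals AC and BD respectively, and suppose BD is the Delaunay diagonal (C strictly outside the circumcircle of ABD). Define V(t) = Σ_{Δ ∈ t} (sum of ‖v‖² over vertices v of Δ)·area(Δ). Then V(t_{BD}) < V(t_{AC}). -/
lemma norm_sq_eq (P : EuclideanSpace ℝ (Fin 2)) : ‖P‖ ^ 2 = P 0 ^ 2 + P 1 ^ 2 := by
  rw [EuclideanSpace.norm_eq, Real.sq_sqrt (by positivity)]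
  simp [Fin.sum_univ_two, sq_abs]

lemma dist_sq_eq (P Q : EuclideanSpace ℝ (Fin 2)) :
    dist P Q ^ 2 = (P 0 - Q 0) ^ 2 + (P 1 - Q 1) ^ 2 := by
  rw [EuclideanSpace.dist_eq, Real.sq_sqrt (by positivity)]
  simp [Fin.sum_univ_two, Real.dist_eq, sq_abs]

set_option maxHeartbeats 1000000 in
/-- For a convex quadrilateral whose Delaunay diagonal is `BD`, the functional
`V(t) = Σ_{Δ ∈ t} (Σ_{v vertex of Δ} ‖v‖²)·area(Δ)` is strictly smaller on the Delaunay
triangulation `t_BD = {ABD, BCD}` than on `t_AC = {ABC, ACD}`. -/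
theorem parabolic_functional_delaunay_quad (A B C D : EuclideanSpace ℝ (Fin 2))
    (hconv : ccw A B C ∧ ccw B C D ∧ ccw C D A ∧ ccw D A B)
    (hABD : AffineIndependent ℝ ![A, B, D])
    (hDel : dist C (circumCtr hABD) > circumRad hABD) :
    (‖A‖ ^ 2 + ‖B‖ ^ 2 + ‖D‖ ^ 2) * triArea A B D +
        (‖B‖ ^ 2 + ‖C‖ ^ 2 + ‖D‖ ^ 2) * triArea B C D <
      (‖A‖ ^ 2 + ‖B‖ ^ 2 + ‖C‖ ^ 2) * triArea A B C +
        (‖A‖ ^ 2 + ‖C‖ ^ 2 + ‖D‖ ^ 2) * triArea A C D := by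
  obtain ⟨h1, h2, h3, h4⟩ := hconv
  unfold ccw at h1 h2 h3 h4
  set S : Affine.Simplex ℝ (EuclideanSpace ℝ (Fin 2)) 2 := ⟨![A, B, D], hABD⟩ with hS
  set O : EuclideanSpace ℝ (Fin 2) := circumCtr hABD with hO
  set r : ℝ := circumRad hABD with hr
  have hOc : O = S.circumcenter := rfl
  have hrc : r = S.circumradius := rfl
  have hpts : S.points = ![A, B, D] := rfl
  have hdA : dist A O = r := by
    have h := S.dist_circumcenter_eq_circumradius 0
    rw [hpts] at h; rw [hOc, hrc]; simpa using h
  have hdB : dist B O = r := by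
    have h := S.dist_circumcenter_eq_circumradius 1
    rw [hpts] at h; rw [hOc, hrc]; simpa using h
  have hdD : dist D O = r := by
    have h := S.dist_circumcenter_eq_circumradius 2
    rw [hpts] at h; rw [hOc, hrc]; simpa using h
  have hr0 : 0 ≤ r := hdA ▸ dist_nonneg
  -- power-of-point equalities
  have hfA : (A 0 - O 0) ^ 2 + (A 1 - O 1) ^ 2 - r ^ 2 = 0 := by
    rw [← dist_sq_eq, hdA]; ring
  have hfB : (B 0 - O 0) ^ 2 + (B 1 - O 1) ^ 2 - r ^ 2 = 0 := by
    rw [← dist_sq_eq, hdB]; ring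
  have hfD : (D 0 - O 0) ^ 2 + (D 1 - O 1) ^ 2 - r ^ 2 = 0 := by
    rw [← dist_sq_eq, hdD]; ring
  have hfC : 0 < (C 0 - O 0) ^ 2 + (C 1 - O 1) ^ 2 - r ^ 2 := by
    have h2 : r ^ 2 < dist C O ^ 2 := by
      have := pow_lt_pow_left₀ hDel hr0 two_ne_zero
      simpa using this
    rw [dist_sq_eq] at h2; linarith
  -- orientations of the four triangles
  have hABD' : 0 < (B 0 - A 0) * (D 1 - A 1) - (B 1 - A 1) * (D 0 - A 0) := by linarith
  have hACD' : 0 < (C 0 - A 0) * (D 1 - A 1) - (C 1 - A 1) * (D 0 - A 0) := by linarith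
  rw [norm_sq_eq A, norm_sq_eq B, norm_sq_eq C, norm_sq_eq D]
  unfold triArea
  rw [abs_of_pos h1, abs_of_pos h2, abs_of_pos hABD', abs_of_pos hACD']
  have key :
      (A 0 ^ 2 + A 1 ^ 2 + (B 0 ^ 2 + B 1 ^ 2) + (C 0 ^ 2 + C 1 ^ 2)) *
            (((B 0 - A 0) * (C 1 - A 1) - (B 1 - A 1) * (C 0 - A 0)) / 2) +
          (A 0 ^ 2 + A 1 ^ 2 + (C 0 ^ 2 + C 1 ^ 2) + (D 0 ^ 2 + D 1 ^ 2)) *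
            (((C 0 - A 0) * (D 1 - A 1) - (C 1 - A 1) * (D 0 - A 0)) / 2) -
          ((A 0 ^ 2 + A 1 ^ 2 + (B 0 ^ 2 + B 1 ^ 2) + (D 0 ^ 2 + D 1 ^ 2)) *
            (((B 0 - A 0) * (D 1 - A 1) - (B 1 - A 1) * (D 0 - A 0)) / 2) +
          (B 0 ^ 2 + B 1 ^ 2 + (C 0 ^ 2 + C 1 ^ 2) + (D 0 ^ 2 + D 1 ^ 2)) *
            (((C 0 - B 0) * (D 1 - B 1) - (C 1 - B 1) * (D 0 - B 0)) / 2)) =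
        ((C 0 - O 0) ^ 2 + (C 1 - O 1) ^ 2 - r ^ 2) *
          ((B 0 - A 0) * (D 1 - A 1) - (B 1 - A 1) * (D 0 - A 0)) / 2 := by
    linear_combination
      (((C 0 - B 0) * (D 1 - B 1) - (C 1 - B 1) * (D 0 - B 0)) / 2) * hfA -
      (((C 0 - A 0) * (D 1 - A 1) - (C 1 - A 1) * (D 0 - A 0)) / 2) * hfB -
      (((B 0 - A 0) * (C 1 - A 1) - (B 1 - A 1) * (C 0 - A 0)) / 2) * hfD
  linarith [mul_pos hfC hABD', key]
end
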